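/- arXiv:2507.17503 — 8 statements merged into one kernel-verified Lean document; each statement's English description precedes it below -/
import Mathlib

section
/- If a linear order L is 2-entangled (i.e., for every uncountable family F of injective, pairwise disjoint pairs (x₀,x₁) with x₀ < x₁ of elements of L and every t ∈ 2², there are two distinct pairs in F realizing t), then L has the countable chain condition: every family of pairwise disjoint nonempty open intervals of L is countable. -/
open Cardinal

/-- Two `n`-tuples `e, e'` realize the binary tuple `t` if the comparison pattern
`(e'ᵢ < eᵢ)ᵢ` equals `t` or its bitwise negation. -/
def Realizes {L : Type*} [LinearOrder L] {n : ℕ} (t : Fin n → Bool) (e e' : Fin n → L) : Prop :=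
  (∀ i, t i = true ↔ e' i < e i) ∨ (∀ i, t i = true ↔ e i < e' i)

/-- `L` is 2-entangled: every uncountable family of injective, pairwise disjoint
increasing pairs realizes every `t ∈ 2²`. -/
def TwoEntangledInc (L : Type*) [LinearOrder L] : Prop :=
  ∀ F : Set (Fin 2 → L), ¬F.Countable →
    (∀ e ∈ F, Function.Injective e) →
    (∀ e ∈ F, e 0 < e 1) →
    (F.Pairwise fun e e' => ∀ i j, e i ≠ e' j) →
    ∀ t : Fin 2 → Bool, ∃ e ∈ F, ∃ e' ∈ F, e ≠ e' ∧ Realizes t e e'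

/-!
Pick a point `xᵢ` in each interval `(aᵢ, bᵢ)` of an uncountable disjoint family and consider the
pairs `(aᵢ, xᵢ)`. Distinct intervals have distinct left endpoints and distinct chosen points, so
each pair meets only finitely many others, and a maximal family of mutually disjoint pairs is
uncountable. Entanglement then gives two of them with `aᵢ ≤ aⱼ` and `xⱼ < xᵢ`; but this puts
`xⱼ` into `(aᵢ, bᵢ)`, against disjointness.
-/

open Set Function

theorem exists_not_countable_pairwise_of_countable_setOf_not {α : Type*} [Uncountable α]
    {r : α → α → Prop} [Std.Symm r] (hcount : ∀ x, {y | ¬ r x y}.Countable) :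
    ∃ t : Set α, ¬ t.Countable ∧ t.Pairwise r := by
  obtain ⟨t, ht⟩ := zorn_subset {t : Set α | t.Pairwise r} fun c hc hchain =>
    ⟨⋃₀ c, hchain.pairwise_sUnion.2 hc, fun _ => subset_sUnion_of_mem⟩
  refine ⟨t, fun htc => not_countable_univ (α := α) ?_, ht.prop⟩
  have hcover : Set.univ ⊆ t ∪ ⋃ y ∈ t, {z | ¬ r y z} := by
    intro z _
    by_contra hz
    simp only [mem_union, mem_iUnion, mem_ofPred_eq, not_or, not_exists, not_not] at hz
    have hins : (insert z t).Pairwise r :=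
      pairwise_insert_of_symm.2 ⟨ht.prop, fun y hy _ => Std.Symm.symm _ _ (hz.2 y hy)⟩
    exact hz.1 (ht.eq_of_subset hins (subset_insert z t) ▸ mem_insert z t)
  exact (htc.union (htc.biUnion fun y _ => hcount y)).mono hcover

theorem le_of_disjoint_Ioo_of_le {L : Type*} [LinearOrder L] {a b a' b' x x' : L}
    (hd : Disjoint (Ioo a b) (Ioo a' b')) (hx : x ∈ Ioo a b) (hx' : x' ∈ Ioo a' b')
    (ha : a ≤ a') : x ≤ x' :=
  not_lt.1 fun hlt => hd.notMem_of_mem_right hx' ⟨ha.trans_lt hx'.1, hlt.trans hx.2⟩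

theorem realizes_false_true_iff {L : Type*} [LinearOrder L] {e e' : Fin 2 → L} :
    Realizes ![false, true] e e' ↔ (e 0 ≤ e' 0 ∧ e' 1 < e 1) ∨ (e' 0 ≤ e 0 ∧ e 1 < e' 1) := by
  simp [Realizes, Fin.forall_fin_two]

section DisjointIoo

variable {L ι : Type*} [LinearOrder L] {a b x : ι → L}

theorem injective_of_pairwise_disjoint_Ioo (hx : ∀ i, x i ∈ Ioo (a i) (b i))
    (hd : Pairwise (Disjoint on fun i => Ioo (a i) (b i))) : Injective x := fun i j hij => by
  by_contra hne
  exact (hd hne).notMem_of_mem_left (hx i) (hij ▸ hx j)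

theorem injective_left_of_pairwise_disjoint_Ioo (hx : ∀ i, x i ∈ Ioo (a i) (b i))
    (hd : Pairwise (Disjoint on fun i => Ioo (a i) (b i))) : Injective a := fun i j hij => by
  by_contra hne
  exact hne (injective_of_pairwise_disjoint_Ioo hx hd
    ((le_of_disjoint_Ioo_of_le (hd hne) (hx i) (hx j) hij.le).antisymm
      (le_of_disjoint_Ioo_of_le (hd (Ne.symm hne)) (hx j) (hx i) hij.ge)))

theorem TwoEntangledInc.countable_of_pairwise_disjoint_Ioo (hL : TwoEntangledInc L)
    (hx : ∀ i, x i ∈ Ioo (a i) (b i)) (hd : Pairwise (Disjoint on fun i => Ioo (a i) (b i))) :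
    Countable ι := by
  by_contra hι
  rw [not_countable_iff] at hι
  have hx_inj := injective_of_pairwise_disjoint_Ioo hx hd
  have ha_inj := injective_left_of_pairwise_disjoint_Ioo hx hd
  let p : ι → Fin 2 → L := fun i => ![a i, x i]
  have hp_inj : Injective p := fun i j hij => hx_inj (congrFun hij 1)
  have hp_lt : ∀ i, p i 0 < p i 1 := fun i => (hx i).1
  let r : ι → ι → Prop := fun i j => ∀ k l, p i k ≠ p j l
  have : Std.Symm r := ⟨fun i j h k l => (h l k).symm⟩
  have hr : ∀ i, {j | ¬ r i j}.Countable := fun i => by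
    refine ((((toFinite {a i, x i}).preimage ha_inj.injOn).union
      ((toFinite {a i, x i}).preimage hx_inj.injOn)).countable).mono fun j hj => ?_
    simp only [mem_ofPred_eq, r, p, Fin.forall_fin_two, Matrix.cons_val_zero,
      Matrix.cons_val_one] at hj
    simp only [mem_union, mem_preimage, mem_insert_iff, mem_singleton_iff]
    grind
  obtain ⟨T, hT, hTr⟩ := exists_not_countable_pairwise_of_countable_setOf_not hr
  obtain ⟨_, ⟨i, -, rfl⟩, _, ⟨j, -, rfl⟩, hne, hreal⟩ :=
    hL (p '' T) (fun h => hT (countable_of_injective_of_countable_image hp_inj.injOn h))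
      (by
        rintro _ ⟨i, -, rfl⟩
        exact (Fin.strictMono_iff_lt_succ.2 (by simpa using hp_lt i)).injective)
      (by rintro _ ⟨i, -, rfl⟩; exact hp_lt i)
      (hp_inj.injOn.pairwise_image.2 hTr) ![false, true]
  have hij : i ≠ j := ne_of_apply_ne p hne
  rcases realizes_false_true_iff.1 hreal with ⟨ha, hlt⟩ | ⟨ha, hlt⟩
  · exact (le_of_disjoint_Ioo_of_le (hd hij) (hx i) (hx j) ha).not_gt hlt
  · exact (le_of_disjoint_Ioo_of_le (hd hij.symm) (hx j) (hx i) ha).not_gt hlt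

end DisjointIoo

/-- A 2-entangled linear order is ccc: every family of pairwise disjoint nonempty
open intervals is countable. -/
theorem twoEntangled_ccc (L : Type*) [LinearOrder L] (hL : TwoEntangledInc L)
    (I : Set (Set L))
    (hint : ∀ s ∈ I, ∃ a b : L, s = Set.Ioo a b)
    (hne : ∀ s ∈ I, s.Nonempty)
    (hdisj : I.Pairwise fun s s' => Disjoint s s') :
    I.Countable := by
  choose a b hab using fun s : I => hint s s.2
  choose x hx using fun s : I => hne s s.2
  refine countable_coe_iff.1 (hL.countable_of_pairwise_disjoint_Ioo (fun s => hab s ▸ hx s) ?_)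
  intro s t hst
  simp only [onFun, ← hab]
  exact hdisj s.2 t.2 (Subtype.coe_injective.ne hst)
end

section
/- Every 2-entangled linear order has only countably many gaps, where a gap is a pair (a,b) with a < b such that no element lies strictly between a and b. -/
/-- `L` is 2-entangled: every uncountable family of injective, pairwise disjoint
pairs realizes every `t ∈ 2²`. -/
def TwoEntangled (L : Type*) [LinearOrder L] : Prop :=
  ∀ F : Set (Fin 2 → L), ¬F.Countable →
    (∀ e ∈ F, Function.Injective e) →
    (F.Pairwise fun e e' => ∀ i j, e i ≠ e' j) →
    ∀ t : Fin 2 → Bool, ∃ e ∈ F, ∃ e' ∈ F, e ≠ e' ∧ Realizes t e e'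

lemma inj_pair {L : Type*} [LinearOrder L] {a b : L} (h : a ≠ b) :
    Function.Injective ![a, b] := by
  intro i j hij
  fin_cases i <;> fin_cases j <;> simp_all

/-- Every 2-entangled linear order has only countably many gaps. -/
theorem twoEntangled_countable_gaps (L : Type*) [LinearOrder L] (hL : TwoEntangled L) :
    {p : L × L | p.1 < p.2 ∧ ¬∃ c : L, p.1 < c ∧ c < p.2}.Countable := by
  set G := {p : L × L | p.1 < p.2 ∧ ¬∃ c : L, p.1 < c ∧ c < p.2} with hGdef
  by_contra hG
  -- uniqueness of gaps with a common left (resp. right) endpoint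
  have huniqR : ∀ p q : L × L, p ∈ G → q ∈ G → p.1 = q.1 → p.2 = q.2 := by
    intro p q hp hq h
    rcases lt_trichotomy p.2 q.2 with h1 | h1 | h1
    · exact absurd ⟨p.2, h ▸ hp.1, h1⟩ hq.2
    · exact h1
    · exact absurd ⟨q.2, h ▸ hq.1, h1⟩ hp.2
  have huniqL : ∀ p q : L × L, p ∈ G → q ∈ G → p.2 = q.2 → p.1 = q.1 := by
    intro p q hp hq h
    rcases lt_trichotomy p.1 q.1 with h1 | h1 | h1
    · exact absurd ⟨q.1, h1, h ▸ hq.1⟩ hp.2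
    · exact h1
    · exact absurd ⟨p.1, h1, h ▸ hp.1⟩ hq.2
  -- the disjointness relation
  set D : L × L → L × L → Prop :=
    fun p q => p.1 ≠ q.1 ∧ p.1 ≠ q.2 ∧ p.2 ≠ q.1 ∧ p.2 ≠ q.2 with hDdef
  -- Zorn: a maximal pairwise-disjoint subfamily of G
  obtain ⟨M, hM⟩ : ∃ M, Maximal (· ∈ {M : Set (L × L) | M ⊆ G ∧ M.Pairwise D}) M := by
    apply zorn_subset
    intro c hc hchain
    refine ⟨⋃₀ c, ⟨?_, ?_⟩, fun s hs => Set.subset_sUnion_of_mem hs⟩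
    · exact Set.sUnion_subset fun s hs => (hc hs).1
    · intro x hx y hy hxy
      obtain ⟨s, hs, hxs⟩ := hx
      obtain ⟨s', hs', hys⟩ := hy
      rcases hchain.total hs hs' with h | h
      · exact (hc hs').2 (h hxs) hys hxy
      · exact (hc hs).2 hxs (h hys) hxy
  obtain ⟨⟨hMG, hMP⟩, hMmax⟩ := hM
  -- M is uncountable
  have hMunc : ¬M.Countable := by
    intro hMc
    apply hG
    have hcover : G ⊆ M ∪ ⋃ q ∈ M, {p ∈ G | ¬ D p q} := by
      intro p hp
      by_cases hpM : p ∈ M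
      · exact Or.inl hpM
      right
      by_contra hcon
      simp only [Set.mem_iUnion, Set.mem_sep_iff, not_exists, not_and, not_not] at hcon
      have : insert p M ∈ {M : Set (L × L) | M ⊆ G ∧ M.Pairwise D} := by
        refine ⟨Set.insert_subset hp hMG, ?_⟩
        intro x hx y hy hxy
        rcases hx with rfl | hx
        · rcases hy with rfl | hy
          · exact absurd rfl hxy
          · exact hcon y hy hp
        · rcases hy with rfl | hy
          · have := hcon x hx hp
            exact ⟨(this.1).symm, (this.2.2.1).symm, (this.2.1).symm, (this.2.2.2).symm⟩
          · exact hMP hx hy hxy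
      have := hMmax this (Set.subset_insert p M)
      exact hpM (this (Set.mem_insert p M))
    refine Set.Countable.mono hcover (hMc.union (hMc.biUnion fun q hq => ?_))
    -- the set of gaps conflicting with q is covered by four subsingletons
    have : {p ∈ G | ¬ D p q} ⊆
        {p ∈ G | p.1 = q.1} ∪ {p ∈ G | p.1 = q.2} ∪ {p ∈ G | p.2 = q.1} ∪ {p ∈ G | p.2 = q.2} := by
      intro p ⟨hp, hnd⟩
      simp only [hDdef, not_and_or, not_not] at hnd
      rcases hnd with h | h | h | h
      · exact Or.inl (Or.inl (Or.inl ⟨hp, h⟩))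
      · exact Or.inl (Or.inl (Or.inr ⟨hp, h⟩))
      · exact Or.inl (Or.inr ⟨hp, h⟩)
      · exact Or.inr ⟨hp, h⟩
    refine Set.Countable.mono this ?_
    have key : ∀ s : Set (L × L), (∀ x ∈ s, ∀ y ∈ s, x = y) → s.Countable := by
      intro s hs
      exact Set.Subsingleton.countable hs
    refine (((key _ ?_).union (key _ ?_)).union (key _ ?_)).union (key _ ?_)
    · intro x hx y hy
      exact Prod.ext (hx.2.trans hy.2.symm)
        (huniqR _ _ hx.1 hy.1 (hx.2.trans hy.2.symm))
    · intro x hx y hy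
      exact Prod.ext (hx.2.trans hy.2.symm)
        (huniqR _ _ hx.1 hy.1 (hx.2.trans hy.2.symm))
    · intro x hx y hy
      exact Prod.ext (huniqL _ _ hx.1 hy.1 (hx.2.trans hy.2.symm))
        (hx.2.trans hy.2.symm)
    · intro x hx y hy
      exact Prod.ext (huniqL _ _ hx.1 hy.1 (hx.2.trans hy.2.symm))
        (hx.2.trans hy.2.symm)
  -- now apply entangledness to the family of pairs from M
  set F : Set (Fin 2 → L) := (fun p : L × L => ![p.1, p.2]) '' M with hFdef
  have hFunc : ¬F.Countable := by
    intro hFc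
    apply hMunc
    have : M ⊆ (fun e : Fin 2 → L => (e 0, e 1)) '' F := by
      intro p hp
      exact ⟨![p.1, p.2], ⟨p, hp, rfl⟩, by simp⟩
    exact Set.Countable.mono this (hFc.image _)
  have hFinj : ∀ e ∈ F, Function.Injective e := by
    rintro e ⟨p, hp, rfl⟩
    exact inj_pair (ne_of_lt (hMG hp).1)
  have hFpair : F.Pairwise fun e e' => ∀ i j, e i ≠ e' j := by
    rintro e ⟨p, hp, rfl⟩ e' ⟨q, hq, rfl⟩ hne i j
    have hpq : p ≠ q := by rintro rfl; exact hne rfl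
    have hd := hMP hp hq hpq
    fin_cases i <;> fin_cases j <;>
      simp only [Matrix.cons_val_zero, Matrix.cons_val_one, Matrix.head_cons] <;>
      [exact hd.1; exact hd.2.1; exact hd.2.2.1; exact hd.2.2.2]
  obtain ⟨e, ⟨p, hp, rfl⟩, e', ⟨q, hq, rfl⟩, hne, hreal⟩ :=
    hL F hFunc hFinj hFpair ![true, false]
  have hpq : p ≠ q := by rintro rfl; exact hne rfl
  have hd := hMP hp hq hpq
  have hpG := hMG hp
  have hqG := hMG hq
  rcases hreal with h | h
  · have h0 := (h 0).mp (by simp)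
    have h1 := (h 1).mpr
    simp only [Matrix.cons_val_zero, Matrix.cons_val_one, Matrix.head_cons] at h0 h1
    -- h0 : q.1 < p.1 ; and ¬ (q.2 < p.2)
    have hb : p.2 < q.2 := by
      rcases lt_trichotomy p.2 q.2 with hh | hh | hh
      · exact hh
      · exact absurd hh hd.2.2.2
      · exact absurd (h1 hh) (by simp)
    exact hqG.2 ⟨p.1, h0, lt_trans hpG.1 hb⟩
  · have h0 := (h 0).mp (by simp)
    have h1 := (h 1).mpr
    simp only [Matrix.cons_val_zero, Matrix.cons_val_one, Matrix.head_cons] at h0 h1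
    have hb : q.2 < p.2 := by
      rcases lt_trichotomy q.2 p.2 with hh | hh | hh
      · exact hh
      · exact absurd hh.symm hd.2.2.2
      · exact absurd (h1 hh) (by simp)
    exact hpG.2 ⟨q.1, h0, lt_trans hqG.1 hb⟩
end

section
/- If a linear order L is 2-entangled, then L admits no strictly decreasing injection f : A → L defined on an uncountable subset A ⊆ L with f(x) ≠ x for all x and with range(f) disjoint from A. -/
/-- A 2-entangled linear order admits no strictly decreasing injection on an
uncountable subset, pointwise different from the identity, with range disjoint
from the domain. -/
theorem twoEntangled_no_strictAnti (L : Type*) [LinearOrder L] (hL : TwoEntangled L) :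
    ¬∃ (A : Set L) (f : L → L), ¬A.Countable ∧ Set.InjOn f A ∧ StrictAntiOn f A ∧
      (∀ x ∈ A, f x ≠ x) ∧ Disjoint (f '' A) A := by
  rintro ⟨A, f, hA, hinj, hanti, hne, hdisj⟩
  set g : L → Fin 2 → L := fun x i => if i = 0 then x else f x with hg
  have hg0 : ∀ x, g x 0 = x := fun x => rfl
  have hg1 : ∀ x, g x 1 = f x := fun x => rfl
  set F := g '' A with hF
  have hdisj' : ∀ x ∈ A, ∀ y ∈ A, f x ≠ y := by
    intro x hx y hy h
    exact Set.disjoint_left.mp hdisj ⟨x, hx, h⟩ hy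
  have hFc : ¬F.Countable := by
    intro h
    apply hA
    have h2 := h.image (fun e => e 0)
    have : (fun e => e 0) '' F = A := by
      ext x; constructor
      · rintro ⟨e, ⟨y, hy, rfl⟩, rfl⟩; exact hy
      · intro hx; exact ⟨g x, ⟨x, hx, rfl⟩, rfl⟩
    rwa [this] at h2
  have hInj : ∀ e ∈ F, Function.Injective e := by
    rintro e ⟨x, hx, rfl⟩ i j hij
    fin_cases i <;> fin_cases j
    · rfl
    · exact absurd hij.symm (hne x hx)
    · exact absurd hij (hne x hx)
    · rfl
  have hPair : F.Pairwise fun e e' => ∀ i j, e i ≠ e' j := by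
    rintro e ⟨x, hx, rfl⟩ e' ⟨y, hy, rfl⟩ hxy i j
    have hxny : x ≠ y := fun h => hxy (by rw [h])
    fin_cases i <;> fin_cases j <;> simp only [hg0, hg1]
    · exact hxny
    · exact fun h => hdisj' y hy x hx h.symm
    · exact hdisj' x hx y hy
    · exact fun h => hxny (hinj hx hy h)
  obtain ⟨e, ⟨x, hx, rfl⟩, e', ⟨y, hy, rfl⟩, hne', hreal⟩ :=
    hL F hFc hInj hPair (fun _ => true)
  rcases hreal with h | h
  · have h0 := (h 0).mp rfl
    have h1 := (h 1).mp rfl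
    rw [hg0, hg0] at h0
    rw [hg1, hg1] at h1
    exact absurd (hanti hy hx h0) (not_lt.mpr h1.le)
  · have h0 := (h 0).mp rfl
    have h1 := (h 1).mp rfl
    rw [hg0, hg0] at h0
    rw [hg1, hg1] at h1
    exact absurd (hanti hx hy h0) (not_lt.mpr h1.le)
end

section
/- If a linear order L is 2-entangled, then any two disjoint uncountable subsets A, B ⊆ L are non-isomorphic as linear orders. -/
/-- In a 2-entangled linear order, any two disjoint uncountable subsets are
non-isomorphic as linear orders (no strictly increasing bijection). -/
theorem twoEntangled_disjoint_not_iso (L : Type*) [LinearOrder L] (hL : TwoEntangled L)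
    (A B : Set L) (hAB : Disjoint A B) (hA : ¬A.Countable) (hB : ¬B.Countable) :
    ¬∃ f : A → B, Function.Bijective f ∧ StrictMono f := by
  rintro ⟨f, hf, hmono⟩
  have hdisj : ∀ x ∈ A, ∀ y ∈ B, x ≠ y := fun x hx y hy hxy =>
    Set.disjoint_left.mp hAB hx (hxy ▸ hy)
  set g : A → (Fin 2 → L) := fun a => ![a.1, (f a).1] with hg
  have hg0 : ∀ a, g a 0 = a.1 := fun a => rfl
  have hg1 : ∀ a, g a 1 = (f a).1 := fun a => rfl
  have hginj : Function.Injective g := by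
    intro a a' h
    have h0 := congrFun h 0
    exact Subtype.ext h0
  set F : Set (Fin 2 → L) := Set.range g with hF
  have hFc : ¬F.Countable := by
    intro h
    apply hA
    have : A = (fun e : Fin 2 → L => e 0) '' F := by
      ext x
      constructor
      · intro hx
        exact ⟨g ⟨x, hx⟩, ⟨⟨x, hx⟩, rfl⟩, rfl⟩
      · rintro ⟨e, ⟨a, rfl⟩, rfl⟩
        exact a.2
    rw [this]
    exact h.image _
  have hinj : ∀ e ∈ F, Function.Injective e := by
    rintro e ⟨a, rfl⟩
    intro i j hij
    fin_cases i <;> fin_cases j <;> simp_all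
    exact hdisj a.1 a.2 (f a).1 (f a).2 hij.symm
  have hpair : F.Pairwise fun e e' => ∀ i j, e i ≠ e' j := by
    rintro e ⟨a, rfl⟩ e' ⟨a', rfl⟩ hne i j
    have haa : a ≠ a' := fun h => hne (h ▸ rfl)
    fin_cases i <;> fin_cases j <;> simp only [hg0, hg1]
    · exact fun h => haa (Subtype.ext h)
    · exact hdisj a.1 a.2 (f a').1 (f a').2
    · exact fun h => hdisj a'.1 a'.2 (f a).1 (f a).2 h.symm
    · exact fun h => haa (hf.1 (Subtype.ext h))
  obtain ⟨e, ⟨a, rfl⟩, e', ⟨a', rfl⟩, hne, hreal⟩ := hL F hFc hinj hpair ![true, false]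
  have haa : a ≠ a' := fun h => hne (h ▸ rfl)
  rcases hreal with h | h
  · have h0 := (h 0).mp rfl
    have h1 := (h 1).not
    simp only [hg0, hg1] at h0 h1
    have : a' < a := h0
    have : f a' < f a := hmono this
    exact (h1.mp (by simp [Matrix.cons_val_one])) this
  · have h0 := (h 0).mp rfl
    have h1 := (h 1).not
    simp only [hg0, hg1] at h0 h1
    have : a < a' := h0
    have : f a < f a' := hmono this
    exact (h1.mp (by simp [Matrix.cons_val_one])) this
end

section
/- Let κ be an infinite cardinal and let L be a (κ, n)-entangled linear order. Then for every collection F of size κ of injective, mutually disjoint n-tuples of L and every binary n-tuple t ∈ 2ⁿ, there exists an infinite subset H ⊆ F such that every two distinct elements of H realize t. -/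
/-!
Join two tuples of `F` when they realize `t`. By the Erdős–Dushnik–Miller theorem this graph has
an infinite clique or an independent set of size `κ`, and entanglement excludes the latter.

Erdős–Dushnik–Miller: if a graph on a set `X` of infinite size `κ` has no infinite clique, then
some `A ⊆ X` of size `κ` has all its degrees inside `A` below `κ` (otherwise nested large
neighbourhoods yield an infinite clique). For regular `κ` a maximal independent subset of `A`
has size `κ`, because `A` is covered by it and by the neighbourhoods of its points. For singular
`κ`, take independent chunks `H i ⊆ A` along a family indexed by `cf κ`, growing unboundedly
below `κ` and each with fewer than `κ` neighbours in `A`; remove from each chunk the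
neighbourhoods of the chunks that are small compared with it, and keep the chunks indexed by a
set of size `cf κ` that is independent for the graph of pairs of chunks neither of which is
small compared with the other, which the regular case provides.
-/

open Cardinal

/-- `L` is `(κ, n)`-entangled. -/
def Entangled (L : Type*) [LinearOrder L] (κ : Cardinal) (n : ℕ) : Prop :=
  κ ≤ #L ∧
  ∀ F : Set (Fin n → L),
    (∀ e ∈ F, Function.Injective e) →
    (F.Pairwise fun e e' => ∀ i j, e i ≠ e' j) →
    #F = κ →
    ∀ t : Fin n → Bool, ∃ e ∈ F, ∃ e' ∈ F, e ≠ e' ∧ Realizes t e e'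

open Set

theorem Realizes.symm {L : Type*} [LinearOrder L] {n : ℕ} {t : Fin n → Bool}
    {e e' : Fin n → L} (h : Realizes t e e') : Realizes t e' e :=
  Or.symm h

theorem Cardinal.IsSingular.exists_cofinal_family {κ : Cardinal.{u}} (hκ : κ.IsSingular) :
    ∃ (ι : Type u) (ρ : ι → Cardinal.{u}), (#ι).IsRegular ∧ #ι < κ ∧ (∀ i, ρ i < κ) ∧
      ∀ ν < κ, #{i | ρ i ≤ ν} < #ι := by
  obtain ⟨s, hs, htype⟩ := Ordinal.exists_ord_cof_eq κ.ord.ToType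
  rw [Ordinal.cof_toType] at htype
  have hs_card : #s = κ.ord.cof := by simpa using congrArg Ordinal.card htype
  refine ⟨s, fun x => (x.1.toOrd : Ordinal).card, ?_, ?_, fun x => lt_ord.mp x.1.toOrd.2, ?_⟩
  · rw [hs_card]; exact isRegular_cof (isSuccLimit_ord hκ.aleph0_le)
  · rw [hs_card]; exact hκ.cof_ord_lt
  · intro ν hν
    have hsucc : (Order.succ ν).ord < κ.ord := ord_lt_ord.mpr (hκ.isSuccLimit.succ_lt hν)
    obtain ⟨z, hz, hyz⟩ := hs (Ordinal.ToType.mk ⟨_, hsucc⟩)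
    refine lt_of_le_of_lt (mk_le_mk_of_subset fun x hx => ?_)
      (mk_Iio_lt (⟨z, hz⟩ : s) (by rw [hs_card, htype]))
    by_contra h
    rw [mem_Iio] at h
    have hle : (Order.succ ν).ord ≤ x.1.toOrd := by
      have := Ordinal.ToType.mk.symm.monotone (hyz.trans (not_lt.mp h))
      rwa [OrderIso.symm_apply_apply] at this
    exact (Order.lt_succ ν).not_ge (by simpa using (Ordinal.card_le_card hle).trans hx)

theorem Cardinal.lt_mk_sdiff {α : Type u} {b : Cardinal.{u}} {H R : Set α} (hb : ℵ₀ ≤ b)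
    (hR : #R ≤ b) (hH : b < #H) : b < #(H \ R : Set α) := by
  by_contra! h
  exact hH.not_ge ((le_mk_sdiff_add_mk H R).trans (add_le_of_le hb h hR))

namespace SimpleGraph

variable {α : Type u} (G : SimpleGraph α)

theorem exists_subset_mk_inter_neighborSet_lt {κ : Cardinal.{u}} {X : Set α} (hX : #X = κ)
    (hX_clique : ∀ T ⊆ X, G.IsClique T → T.Finite) :
    ∃ A ⊆ X, #A = κ ∧ ∀ x ∈ A, #(A ∩ G.neighborSet x : Set α) < κ := by
  by_contra! hbig
  have : Nonempty α := let ⟨x, _⟩ := hbig X subset_rfl hX; ⟨x⟩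
  choose! pick hpick_mem hpick_deg using hbig
  set Y : ℕ → Set α := fun n => (fun Z => Z ∩ G.neighborSet (pick Z))^[n] X
  have hY_succ : ∀ n, Y (n + 1) = Y n ∩ G.neighborSet (pick (Y n)) := fun n =>
    Function.iterate_succ_apply' _ n X
  have hY_anti : Antitone Y :=
    antitone_nat_of_succ_le fun n => (hY_succ n).trans_subset inter_subset_left
  have hY : ∀ n, Y n ⊆ X ∧ #(Y n) = κ := by
    intro n
    induction n with
    | zero => exact ⟨subset_rfl, hX⟩
    | succ n ih =>
      refine ⟨(hY_anti n.le_succ).trans ih.1, le_antisymm ?_ ?_⟩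
      · exact ih.2 ▸ mk_le_mk_of_subset (hY_anti n.le_succ)
      · exact hY_succ n ▸ hpick_deg (Y n) ih.1 ih.2
  have hmem : ∀ n, pick (Y n) ∈ Y n := fun n => hpick_mem _ (hY n).1 (hY n).2
  have hadj : ∀ m n, m < n → G.Adj (pick (Y m)) (pick (Y n)) := fun m n hmn => by
    have := hY_anti hmn (hmem n)
    rw [hY_succ] at this
    exact this.2
  have hadj' : Pairwise fun m n => G.Adj (pick (Y m)) (pick (Y n)) := fun m n hne =>
    (lt_or_gt_of_ne hne).elim (hadj m n) fun h => (hadj n m h).symm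
  refine infinite_range_of_injective ?_ (hX_clique _ ?_ hadj'.range_pairwise)
  · exact fun m n h => by_contra fun hne => (hadj' hne).ne h
  · rintro _ ⟨n, rfl⟩; exact (hY n).1 (hmem n)

theorem exists_isIndepSet_subset_forall_exists_adj (A : Set α) :
    ∃ T ⊆ A, G.IsIndepSet T ∧ ∀ x ∈ A, x ∉ T → ∃ y ∈ T, G.Adj x y := by
  obtain ⟨T, ⟨hTA, hT⟩, hmax⟩ := zorn_subset {T | T ⊆ A ∧ G.IsIndepSet T} fun c hc hchain =>
    ⟨⋃₀ c, ⟨sUnion_subset fun T hT => (hc hT).1,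
      (pairwise_sUnion hchain.directedOn).2 fun T hT => (hc hT).2⟩,
      fun _ => subset_sUnion_of_mem⟩
  refine ⟨T, hTA, hT, fun x hxA hxT => ?_⟩
  by_contra! hnadj
  have hins : G.IsIndepSet (insert x T) :=
    hT.insert fun y hy _ => ⟨hnadj y hy, fun h => hnadj y hy h.symm⟩
  exact hxT (hmax ⟨insert_subset hxA hTA, hins⟩ (subset_insert x T) (mem_insert x T))

theorem exists_isIndepSet_of_mk_inter_neighborSet_lt {μ : Cardinal.{u}} (hμ : μ.IsRegular)
    {A : Set α} (hA : #A = μ) (hA_deg : ∀ x ∈ A, #(A ∩ G.neighborSet x : Set α) < μ) :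
    ∃ T ⊆ A, #T = μ ∧ G.IsIndepSet T := by
  obtain ⟨T, hTA, hT, hdom⟩ := G.exists_isIndepSet_subset_forall_exists_adj A
  refine ⟨T, hTA, le_antisymm (hA ▸ mk_le_mk_of_subset hTA) (not_lt.mp fun hTμ => ?_), hT⟩
  have hcover : A ⊆ T ∪ ⋃ y ∈ T, A ∩ G.neighborSet y := fun x hxA => by
    by_cases hxT : x ∈ T
    · exact Or.inl hxT
    · obtain ⟨y, hyT, hxy⟩ := hdom x hxA hxT
      exact Or.inr (mem_biUnion hyT ⟨hxA, hxy.symm⟩)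
  have hsmall : #(⋃ y ∈ T, A ∩ G.neighborSet y : Set α) < μ :=
    (card_biUnion_lt_iff_forall_of_isRegular hμ hTμ).2 fun y hy => hA_deg y (hTA hy)
  exact (mk_le_mk_of_subset hcover |>.trans (mk_union_le _ _) |>.trans_lt
    (add_lt_of_lt hμ.aleph0_le hTμ hsmall)).ne hA

theorem exists_isIndepSet_of_isRegular {μ : Cardinal.{u}} (hμ : μ.IsRegular) {X : Set α}
    (hX : #X = μ) (hX_clique : ∀ T ⊆ X, G.IsClique T → T.Finite) :
    ∃ T ⊆ X, #T = μ ∧ G.IsIndepSet T :=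
  let ⟨_, hAX, hA, hA_deg⟩ := G.exists_subset_mk_inter_neighborSet_lt hX hX_clique
  let ⟨T, hTA, hT, hT_indep⟩ := G.exists_isIndepSet_of_mk_inter_neighborSet_lt hμ hA hA_deg
  ⟨T, hTA.trans hAX, hT, hT_indep⟩

theorem isIndepSet_biUnion {ι : Type*} {S : Set ι} {K : ι → Set α}
    (hK : ∀ i ∈ S, G.IsIndepSet (K i))
    (hKK : ∀ i ∈ S, ∀ j ∈ S, i ≠ j → ∀ x ∈ K i, ∀ y ∈ K j, ¬G.Adj x y) :
    G.IsIndepSet (⋃ i ∈ S, K i) := by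
  intro x hx y hy hne
  obtain ⟨i, hi, hxi⟩ := mem_iUnion₂.1 hx
  obtain ⟨j, hj, hyj⟩ := mem_iUnion₂.1 hy
  by_cases hij : i = j
  · subst hij
    exact hK i hi hxi hyj hne
  · exact hKK i hi j hj hij x hxi y hyj

def neighborsIn (A S : Set α) : Set α := ⋃ y ∈ S, A ∩ G.neighborSet y

theorem exists_isIndepSet_lt_mk_of_isSingular {κ : Cardinal.{u}} (hκ : κ.IsSingular)
    {ι : Type u} {ρ : ι → Cardinal.{u}} (hρκ : ∀ i, ρ i < κ) (hρ : ∀ ν < κ, ∃ i, ν ≤ ρ i)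
    {A : Set α} (hA : #A = κ) (hA_deg : ∀ x ∈ A, #(A ∩ G.neighborSet x : Set α) < κ)
    (hA_clique : ∀ T ⊆ A, G.IsClique T → T.Finite)
    {b : Cardinal.{u}} (hb : ℵ₀ ≤ b) (hιb : #ι ≤ b) (hbκ : b < κ) :
    ∃ H ⊆ A, G.IsIndepSet H ∧ b < #H ∧ #(G.neighborsIn A H) < κ := by
  have hμ : (Order.succ b).IsRegular := isRegular_succ hb
  have hμκ : Order.succ b < κ := hκ.isSuccLimit.succ_lt hbκ
  obtain ⟨X, hXA, hX⟩ := le_mk_iff_exists_subset.1 (hA ▸ hμκ.le)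
  obtain ⟨T, hTX, hT, hT_indep⟩ :=
    G.exists_isIndepSet_of_isRegular hμ hX fun S hS => hA_clique S (hS.trans hXA)
  set level : ι → Set α := fun i => {y ∈ T | #(A ∩ G.neighborSet y : Set α) ≤ ρ i}
  obtain ⟨i, hi⟩ : ∃ i, Order.succ b ≤ #(level i) := by
    by_contra! hsmall
    have hcover : T ⊆ ⋃ i, level i := fun y hy =>
      let ⟨i, hi⟩ := hρ _ (hA_deg y (hXA (hTX hy)))
      mem_iUnion.2 ⟨i, hy, hi⟩
    exact (mk_le_mk_of_subset hcover).not_gt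
      (hT ▸ (card_iUnion_lt_iff_forall_of_isRegular hμ (hιb.trans_lt (Order.lt_succ b))).2 hsmall)
  have hlevel_lt : #(level i) < κ :=
    (mk_le_mk_of_subset fun y hy => hy.1).trans_lt (hT ▸ hμκ)
  refine ⟨level i, fun y hy => hXA (hTX hy.1), hT_indep.mono fun y hy => hy.1,
    (Order.lt_succ b).trans_le hi, ?_⟩
  refine (mk_biUnion_le _ _).trans_lt (mul_lt_of_lt hκ.aleph0_le hlevel_lt ?_)
  exact (ciSup_le' fun y => y.2.2).trans_lt (hρκ i)

theorem exists_isIndepSet_le_mk_of_chunks {κ : Cardinal.{u}} {ι : Type u} (hι : (#ι).IsRegular)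
    {ρ : ι → Cardinal.{u}} (hρ : ∀ ν < κ, #{i | ρ i ≤ ν} < #ι) {A : Set α} {H : ι → Set α}
    (hHA : ∀ i, H i ⊆ A) (hH_indep : ∀ i, G.IsIndepSet (H i))
    (hH_card : ∀ i, max (ρ i) #ι < #(H i)) (hH_nbhd : ∀ i, #(G.neighborsIn A (H i)) < κ) :
    ∃ T ⊆ A, κ ≤ #T ∧ G.IsIndepSet T := by
  set b : ι → Cardinal := fun i => max (ρ i) #ι
  set N : ι → Set α := fun i => G.neighborsIn A (H i)
  -- `H' i` removes from `H i` the neighbourhoods of the chunks that are small compared with it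
  set H' : ι → Set α := fun i => H i \ ⋃ j ∈ {j | #(N j) ≤ b i}, N j
  have hH'_card : ∀ i, b i < #(H' i) := fun i => by
    have hb : ℵ₀ ≤ b i := hι.aleph0_le.trans (le_max_right _ _)
    refine lt_mk_sdiff hb ((mk_biUnion_le _ _).trans ?_) (hH_card i)
    exact (mul_le_mul' ((mk_set_le _).trans (le_max_right _ _)) (ciSup_le' fun j => j.2)).trans
      (mul_eq_self hb).le
  have hsep : ∀ i j, ∀ x ∈ H i, ∀ y ∈ H' j, G.Adj x y → b j < #(N i) := by
    intro i j x hx y hy hxy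
    by_contra! hle
    exact hy.2 (mem_biUnion hle (mem_biUnion hx ⟨hHA j hy.1, hxy⟩))
  -- `i` and `j` are joined when neither chunk is small compared with the other
  set r : ι → ι → Prop := fun i j => b j < #(N i) ∧ b i < #(N j)
  have hr_deg : ∀ i ∈ Set.univ, #(Set.univ ∩ (fromRel r).neighborSet i : Set ι) < #ι := by
    intro i _
    refine (mk_le_mk_of_subset fun j hj => ?_).trans_lt (hρ _ (hH_nbhd i))
    obtain ⟨-, h | h⟩ := (fromRel_adj r i j).1 hj.2
    exacts [(le_max_left _ _).trans h.1.le, (le_max_left _ _).trans h.2.le]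
  obtain ⟨S, -, hS, hS_indep⟩ :=
    (fromRel r).exists_isIndepSet_of_mk_inter_neighborSet_lt hι mk_univ hr_deg
  refine ⟨⋃ i ∈ S, H' i, iUnion₂_subset fun i _ => sdiff_subset.trans (hHA i),
    le_of_forall_lt fun ν hν => ?_, ?_⟩
  · obtain ⟨i, hiS, hi⟩ : ∃ i ∈ S, ν < ρ i := by
      by_contra! hle
      exact (mk_le_mk_of_subset hle).not_gt (hS ▸ hρ ν hν)
    calc ν < b i := hi.trans_le (le_max_left _ _)
      _ < #(H' i) := hH'_card i
      _ ≤ #(⋃ i ∈ S, H' i : Set α) := mk_le_mk_of_subset (subset_biUnion_of_mem hiS)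
  · refine G.isIndepSet_biUnion (fun i _ => (hH_indep i).mono sdiff_subset) ?_
    intro i hi j hj hij x hx y hy hxy
    exact hS_indep hi hj hij ((fromRel_adj r i j).2
      ⟨hij, Or.inl ⟨hsep i j x hx.1 y hy hxy, hsep j i y hy.1 x hx hxy.symm⟩⟩)

theorem exists_isIndepSet_of_isSingular {κ : Cardinal.{u}} (hκ : κ.IsSingular) {A : Set α}
    (hA : #A = κ) (hA_deg : ∀ x ∈ A, #(A ∩ G.neighborSet x : Set α) < κ)
    (hA_clique : ∀ T ⊆ A, G.IsClique T → T.Finite) :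
    ∃ T ⊆ A, #T = κ ∧ G.IsIndepSet T := by
  obtain ⟨ι, ρ, hι, hικ, hρκ, hρ⟩ := hκ.exists_cofinal_family
  have hρ_cof : ∀ ν < κ, ∃ i, ν ≤ ρ i := fun ν hν => by
    by_contra! h
    have hall : {i | ρ i ≤ ν} = Set.univ := eq_univ_of_forall fun i => (h i).le
    exact (hρ ν hν).ne (by rw [hall, mk_univ])
  choose H hHA hH_indep hH_card hH_nbhd using fun i =>
    G.exists_isIndepSet_lt_mk_of_isSingular hκ hρκ hρ_cof hA hA_deg hA_clique
      (hι.aleph0_le.trans (le_max_right _ _)) (le_max_right _ _) (max_lt (hρκ i) hικ)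
  obtain ⟨T, hTA, hT, hT_indep⟩ :=
    G.exists_isIndepSet_le_mk_of_chunks hι hρ hHA hH_indep hH_card hH_nbhd
  exact ⟨T, hTA, le_antisymm (hA ▸ mk_le_mk_of_subset hTA) hT, hT_indep⟩

theorem erdos_dushnik_miller {X : Set α} (hX : ℵ₀ ≤ #X) :
    (∃ T ⊆ X, T.Infinite ∧ G.IsClique T) ∨ ∃ T ⊆ X, #T = #X ∧ G.IsIndepSet T := by
  refine or_iff_not_imp_left.2 fun hno => ?_
  have hX_clique : ∀ T ⊆ X, G.IsClique T → T.Finite := fun T hTX hT =>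
    not_infinite.1 fun hT_inf => hno ⟨T, hTX, hT_inf, hT⟩
  rcases isRegular_or_isSingular hX with hreg | hsing
  · exact G.exists_isIndepSet_of_isRegular hreg rfl hX_clique
  · obtain ⟨A, hAX, hA, hA_deg⟩ := G.exists_subset_mk_inter_neighborSet_lt rfl hX_clique
    obtain ⟨T, hTA, hT, hT_indep⟩ := G.exists_isIndepSet_of_isSingular hsing hA hA_deg
      fun S hS => hX_clique S (hS.trans hAX)
    exact ⟨T, hTA.trans hAX, hT, hT_indep⟩

end SimpleGraph

/-- In a `(κ, n)`-entangled linear order, every size-`κ` family of injective,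
mutually disjoint `n`-tuples contains an infinite subfamily whose members
pairwise realize any given type `t`. -/
theorem entangled_infinite_subfamily (L : Type*) [LinearOrder L] (κ : Cardinal)
    (hκ : ℵ₀ ≤ κ) (n : ℕ) (hL : Entangled L κ n)
    (F : Set (Fin n → L))
    (hinj : ∀ e ∈ F, Function.Injective e)
    (hdisj : F.Pairwise fun e e' => ∀ i j, e i ≠ e' j)
    (hcard : #F = κ) (t : Fin n → Bool) :
    ∃ H ⊆ F, H.Infinite ∧ H.Pairwise (Realizes t) := by
  rcases (SimpleGraph.fromRel (Realizes t)).erdos_dushnik_miller (hcard ▸ hκ) with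
    ⟨H, hHF, hH, hH_clique⟩ | ⟨T, hTF, hT, hT_indep⟩
  · exact ⟨H, hHF, hH, hH_clique.mono' fun e e' h => h.2.elim id Realizes.symm⟩
  · obtain ⟨e, he, e', he', hne, hreal⟩ :=
      hL.2 T (fun e he => hinj e (hTF he)) (hdisj.mono hTF) (hT.trans hcard) t
    exact (hT_indep he he' hne ⟨hne, Or.inl hreal⟩).elim
end

section
/- Any infinite graph G = (V, E) that contains no independent set of cardinality |V| contains an infinite complete subgraph. (Erdős–Dushnik–Miller) -/
/-!
Suppose every clique is finite and `#A = κ` is infinite. Greedily extending a finite clique whose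
common neighbourhood in `A` still has size `κ` would produce an infinite clique, so the process
stops, and this yields `W ⊆ A` of size `κ` in which every vertex has fewer than `κ` neighbours.

If `κ` is regular, a maximal independent subset of `W` has size `κ`: otherwise it and its
neighbourhood would cover `W` with fewer than `κ` points.

If `κ` is singular, take regular cardinals `t j < κ`, `j < cf κ`, cofinal in `κ`, and choose by
transfinite recursion independent sets `T j ⊆ W` of size `t j`, each disjoint from the
neighbourhoods of the earlier ones. Taking `T j` among the vertices of degree at most some fixed
`ρ < κ` (there are more than `t j` of them, by pigeonhole over the degrees) keeps the neighbourhood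
of `T j` below `κ`, and fewer than `cf κ` such neighbourhoods have union below `κ`. The union of
the `T j` is then independent of size `κ`.
-/

open Cardinal Ordinal Order Set Function

universe u

theorem WellFoundedLT.exists_transfinite_choice {L α : Type*} [Preorder L] [WellFoundedLT L]
    (good : α → Prop) (R : ∀ j : L, (Iio j → α) → α → Prop)
    (h : ∀ j g, (∀ i, good (g i)) → ∃ a, good a ∧ R j g a) :
    ∃ f : L → α, ∀ j, good (f j) ∧ R j (fun i => f i) (f j) := by
  let f : L → {a // good a} := wellFounded_lt.fix fun j g =>
    let e := h j (fun i => (g i i.2).1) fun i => (g i i.2).2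
    ⟨e.choose, e.choose_spec.1⟩
  refine ⟨fun j => f j, fun j => ⟨(f j).2, ?_⟩⟩
  show R j (fun i => (f i).1) (f j).1
  rw [show f j = _ from wellFounded_lt.fix_eq _ j]
  exact (h j _ fun i => (f i).2).choose_spec.2

theorem Cardinal.exists_lt_mk_setOf_le {V : Type u} {κ c : Cardinal.{u}} (hκ : IsSuccLimit κ)
    {W : Set V} (hW : κ ≤ #W) (d : V → Cardinal.{u}) (hd : ∀ v ∈ W, d v < κ) (hc : c < κ) :
    ∃ ρ < κ, c < #{v ∈ W | d v ≤ ρ} := by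
  by_contra! hsmall
  obtain ⟨Z, hZW, hZ⟩ := le_mk_iff_exists_subset.mp ((hκ.succ_lt hc).le.trans hW)
  have hcover : W ⊆ ⋃ z ∈ Z, {v ∈ W | d v ≤ d z} := by
    intro w hw
    by_contra! hw'
    simp only [mem_iUnion, mem_ofPred_eq, not_exists, not_and, not_le] at hw'
    have hZw : Z ⊆ {v ∈ W | d v ≤ d w} := fun z hz => ⟨hZW hz, (hw' z hz hw).le⟩
    exact (hZ ▸ mk_le_mk_of_subset hZw).trans (hsmall _ (hd w hw)) |>.not_gt (lt_succ c)
  have : #W < κ := calc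
    #W ≤ #Z * ⨆ z : Z, #{v ∈ W | d v ≤ d z} :=
      (mk_le_mk_of_subset hcover).trans (mk_biUnion_le _ _)
    _ ≤ succ c * c := mul_le_mul' hZ.le (ciSup_le' fun z => hsmall _ (hd z (hZW z.2)))
    _ < κ := mul_lt_of_lt (aleph0_le_of_isSuccLimit hκ) (hκ.succ_lt hc) hc
  exact this.not_ge hW

theorem Cardinal.exists_isRegular_cofinal {κ : Cardinal.{u}} (hκ : IsSuccLimit κ) (hω : ℵ₀ < κ) :
    ∃ t : κ.ord.cof.ord.ToType → Cardinal.{u}, (∀ j, (t j).IsRegular ∧ t j < κ) ∧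
      ∀ c < κ, ∃ j, c < t j := by
  obtain ⟨f, hf⟩ := exists_isFundamentalSeq (o := κ.ord) rfl
  refine ⟨fun j => succ (max ℵ₀ (f j.toOrd).1.card), fun j =>
    ⟨isRegular_succ (le_max_left _ _), hκ.succ_lt (max_lt hω (lt_ord.1 (f _).2))⟩, ?_⟩
  intro c hc
  obtain ⟨_, ⟨i, rfl⟩, hi⟩ := hf.isCofinal_range ⟨c.ord, ord_lt_ord.2 hc⟩
  refine ⟨ToType.mk i, lt_succ_of_le (le_max_of_le_right ?_)⟩
  simpa using card_le_card (show c.ord ≤ (f i).1 from hi)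

namespace SimpleGraph

variable {V : Type u} {G : SimpleGraph V}

theorem exists_isIndepSet_subset_forall_adj (G : SimpleGraph V) (C : Set V) :
    ∃ I ⊆ C, G.IsIndepSet I ∧ ∀ v ∈ C, v ∉ I → ∃ u ∈ I, G.Adj u v := by
  obtain ⟨I, hI⟩ := zorn_subset {I | I ⊆ C ∧ G.IsIndepSet I} fun c hc hchain =>
    ⟨⋃₀ c, ⟨sUnion_subset fun s hs => (hc hs).1,
      (pairwise_sUnion hchain.directedOn).2 fun s hs => (hc hs).2⟩, fun _ => subset_sUnion_of_mem⟩
  refine ⟨I, hI.prop.1, hI.prop.2, fun v hvC hvI => ?_⟩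
  by_contra! hv
  have hinsert : insert v I ∈ {I | I ⊆ C ∧ G.IsIndepSet I} :=
    ⟨insert_subset hvC hI.prop.1,
      hI.prop.2.insert fun u hu _ => ⟨fun h => hv u hu h.symm, hv u hu⟩⟩
  exact hvI (hI.2 hinsert (subset_insert v I) (mem_insert v I))

theorem isIndepSet_iUnion_of_lt {L : Type*} [LinearOrder L] {T : L → Set V}
    (hT : ∀ j, G.IsIndepSet (T j)) (hcross : ∀ i j, i < j → ∀ v ∈ T i, ∀ w ∈ T j, ¬G.Adj v w) :
    G.IsIndepSet (⋃ j, T j) := by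
  simp only [IsIndepSet, Set.Pairwise, mem_iUnion]
  rintro v ⟨i, hv⟩ w ⟨j, hw⟩ hvw
  rcases lt_trichotomy i j with h | rfl | h
  · exact hcross i j h v hv w hw
  · exact hT i hv hw hvw
  · exact fun hadj => hcross j i h w hw v hv hadj.symm

theorem exists_subset_mk_eq_forall_mk_neighborSet_inter_lt
    (hG : ∀ s, G.IsClique s → s.Finite) (A : Set V) :
    ∃ W ⊆ A, #W = #A ∧ ∀ v ∈ W, #(G.neighborSet v ∩ W : Set V) < #A := by
  by_contra! hbig
  let common : Set V → Set V := fun s => {w ∈ A | ∀ u ∈ s, G.Adj u w}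
  have hstep : ∀ s, #(common s) = #A → ∃ v ∈ common s, #(common (insert v s)) = #A := by
    intro s hs
    obtain ⟨v, hv, hvbig⟩ := hbig (common s) (sep_subset _ _) hs
    have hinsert : G.neighborSet v ∩ common s = common (insert v s) := by
      ext w
      simp only [common, mem_inter_iff, mem_neighborSet, mem_ofPred_eq, mem_insert_iff,
        forall_eq_or_imp]
      tauto
    refine ⟨v, hv, (mk_le_mk_of_subset (sep_subset _ _)).antisymm ?_⟩
    exact hvbig.trans_eq (by rw [hinsert])
  -- `choose!` needs an inhabitant of `V`
  have : Nonempty V := let ⟨v, _⟩ := hbig A subset_rfl rfl; ⟨v⟩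
  choose! next hnext_mem hnext using hstep
  let chain : ℕ → Set V := fun n => Nat.rec ∅ (fun _ s => insert (next s) s) n
  have hchain : ∀ n, #(common (chain n)) = #A := fun n => by
    induction n with
    | zero => simp [chain, common]
    | succ n ih => exact hnext _ ih
  have hmono : Monotone chain := monotone_nat_of_le_succ fun n => subset_insert _ _
  let v : ℕ → V := fun n => next (chain n)
  have := G.symm
  have hclique : Pairwise (G.Adj on v) := (Std.Symm.pairwise_on v).2 fun m n hmn =>
    (hnext_mem _ (hchain n)).2 (v m) (hmono hmn (mem_insert _ _))
  have hinj : v.Injective := Function.injective_iff_pairwise_ne.2 (hclique.mono fun _ _ => Adj.ne)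
  exact infinite_range_of_injective hinj (hG _ hclique.range_pairwise)

theorem exists_isIndepSet_of_isRegular_s5 (hG : ∀ s, G.IsClique s → s.Finite) {κ : Cardinal.{u}}
    (hκ : κ.IsRegular) {A : Set V} (hA : κ ≤ #A) : ∃ I ⊆ A, G.IsIndepSet I ∧ #I = κ := by
  obtain ⟨A', hA'A, hA'⟩ := le_mk_iff_exists_subset.mp hA
  obtain ⟨W, hWA', hW, hdeg⟩ := exists_subset_mk_eq_forall_mk_neighborSet_inter_lt hG A'
  rw [hA'] at hW hdeg
  obtain ⟨I, hIW, hI, hmax⟩ := G.exists_isIndepSet_subset_forall_adj W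
  refine ⟨I, hIW.trans (hWA'.trans hA'A), hI, (hW ▸ mk_le_mk_of_subset hIW).antisymm ?_⟩
  by_contra! hIκ
  have hcover : W ⊆ I ∪ ⋃ u ∈ I, G.neighborSet u ∩ W := fun w hw => by
    by_cases hwI : w ∈ I
    · exact Or.inl hwI
    · obtain ⟨u, hu, huw⟩ := hmax w hw hwI
      exact Or.inr (mem_biUnion hu ⟨huw, hw⟩)
  have hWκ : #W < κ := (mk_le_mk_of_subset hcover).trans_lt <| (mk_union_le _ _).trans_lt <|
    add_lt_of_lt hκ.aleph0_le hIκ <|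
      (card_biUnion_lt_iff_forall_of_isRegular hκ hIκ).2 fun u hu => hdeg u (hIW hu)
  exact hWκ.ne hW

theorem exists_isIndepSet_disjoint_mk_neighborSet_lt (hG : ∀ s, G.IsClique s → s.Finite)
    {κ t : Cardinal.{u}} (hκ : IsSuccLimit κ) {W : Set V} (hW : κ ≤ #W)
    (hdeg : ∀ v ∈ W, #(G.neighborSet v ∩ W : Set V) < κ) (ht : t.IsRegular) (htκ : t < κ)
    {F : Set V} (hF : #F < κ) :
    ∃ T ⊆ W, Disjoint T F ∧ G.IsIndepSet T ∧ #T = t ∧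
      #(⋃ v ∈ T, G.neighborSet v ∩ W) < κ := by
  set c := max t #F
  obtain ⟨ρ, hρ, hCρ⟩ := exists_lt_mk_setOf_le hκ hW _ hdeg (max_lt htκ hF : c < κ)
  set C := {v ∈ W | #(G.neighborSet v ∩ W : Set V) ≤ ρ}
  have htC : t ≤ #(C \ F : Set V) := by
    by_contra! h
    have hCc : #C ≤ c := calc
      #C ≤ #(C \ F : Set V) + #F := le_mk_sdiff_add_mk C F
      _ ≤ c + c := add_le_add (h.le.trans (le_max_left _ _)) (le_max_right _ _)
      _ = c := add_eq_self (ht.aleph0_le.trans (le_max_left _ _))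
    exact hCρ.not_ge hCc
  obtain ⟨T, hTCF, hTind, hTt⟩ := exists_isIndepSet_of_isRegular_s5 hG ht htC
  have hTC : T ⊆ C := hTCF.trans sdiff_subset
  refine ⟨T, hTC.trans (sep_subset _ _), disjoint_of_subset_left hTCF disjoint_sdiff_left, hTind,
    hTt, ?_⟩
  calc #(⋃ v ∈ T, G.neighborSet v ∩ W)
      ≤ #T * ⨆ v : T, #(G.neighborSet v ∩ W : Set V) := mk_biUnion_le _ _
    _ ≤ t * ρ := mul_le_mul' hTt.le (ciSup_le' fun v => (hTC v.2).2)
    _ < κ := mul_lt_of_lt (aleph0_le_of_isSuccLimit hκ) htκ hρ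

theorem exists_isIndepSet_of_isSingular_s5 (hG : ∀ s, G.IsClique s → s.Finite) {A : Set V}
    (hA : (#A).IsSingular) : ∃ I ⊆ A, G.IsIndepSet I ∧ #I = #A := by
  set κ := #A
  obtain ⟨W, hWA, hW, hdeg⟩ := exists_subset_mk_eq_forall_mk_neighborSet_inter_lt hG A
  have hω : ℵ₀ < κ := hA.aleph0_le.lt_of_ne fun h => not_isSingular_aleph0 (h ▸ hA)
  obtain ⟨t, ht, hcof⟩ := exists_isRegular_cofinal hA.isSuccLimit hω
  obtain ⟨T, hT⟩ := WellFoundedLT.exists_transfinite_choice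
    (fun T => #(⋃ v ∈ T, G.neighborSet v ∩ W) < κ)
    (fun j g T => T ⊆ W ∧ Disjoint T (⋃ i, ⋃ v ∈ g i, G.neighborSet v ∩ W) ∧
      G.IsIndepSet T ∧ #T = t j)
    fun j g hg => by
      have hF : #(⋃ i, ⋃ v ∈ g i, G.neighborSet v ∩ W) < κ := by
        have hj : #(Iio j) < κ.ord.cof := by simpa using mk_Iio_lt j
        exact (mk_iUnion_le _).trans_lt <| mul_lt_of_lt hA.aleph0_le
          (hj.trans_le (cof_ord_le κ)) (iSup_lt_of_lt_cof_ord hj hg)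
      obtain ⟨T, hTW, hTF, hTind, hTt, hTsmall⟩ := exists_isIndepSet_disjoint_mk_neighborSet_lt
        hG hA.isSuccLimit hW.ge hdeg (ht j).1 (ht j).2 hF
      exact ⟨T, hTsmall, hTW, hTF, hTind, hTt⟩
  simp only [forall_and] at hT
  obtain ⟨-, hTW, hTdisj, hTind, hTcard⟩ := hT
  have hTA : ⋃ j, T j ⊆ A := iUnion_subset fun j => (hTW j).trans hWA
  refine ⟨⋃ j, T j, hTA, isIndepSet_iUnion_of_lt hTind ?_, ?_⟩
  · intro i j hij v hv w hw hvw
    have hw_nbhd : w ∈ ⋃ v ∈ T i, G.neighborSet v ∩ W := mem_biUnion hv ⟨hvw, hTW j hw⟩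
    exact Set.disjoint_left.1 (hTdisj j) hw (mem_iUnion_of_mem (⟨i, hij⟩ : Iio j) hw_nbhd)
  · refine (mk_le_mk_of_subset hTA).antisymm (not_lt.1 fun hlt => ?_)
    obtain ⟨j, hj⟩ := hcof _ hlt
    exact hj.not_ge (hTcard j ▸ mk_le_mk_of_subset (subset_iUnion T j))

theorem exists_isIndepSet_mk_eq (hG : ∀ s, G.IsClique s → s.Finite) {A : Set V}
    (hA : ℵ₀ ≤ #A) : ∃ I ⊆ A, G.IsIndepSet I ∧ #I = #A :=
  (isRegular_or_isSingular hA).elim (fun h => exists_isIndepSet_of_isRegular_s5 hG h le_rfl)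
    (exists_isIndepSet_of_isSingular_s5 hG)

end SimpleGraph

/-- Erdős–Dushnik–Miller: an infinite graph with no independent set of full
cardinality contains an infinite complete subgraph. -/
theorem erdos_dushnik_miller {V : Type*} [Infinite V] (G : SimpleGraph V)
    (h : ¬∃ S : Set V, #S = #V ∧ S.Pairwise fun a b => ¬G.Adj a b) :
    ∃ H : Set V, H.Infinite ∧ H.Pairwise G.Adj := by
  by_contra! hno
  obtain ⟨I, -, hI, hIcard⟩ := G.exists_isIndepSet_mk_eq (A := univ)
    (fun H hH => not_infinite.1 fun hinf => hno H hinf hH) (by simp)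
  exact h ⟨I, hIcard.trans mk_univ, hI⟩
end

section
/- Define s₂ : 2^ω → 2^ω by s₂(x)(n) = 1 - x(n) if n is even and s₂(x)(n) = x(n) if n is odd. Then for any A ⊆ 2^ω: A is monochromatic if and only if the restriction of s₂ to A is monotone with respect to the lexicographic order on 2^ω. -/
noncomputable def delta (x y : ℕ → Bool) : ℕ := sInf {n | x n ≠ y n}

def Monochromatic (S : Set (ℕ → Bool)) : Prop :=
  ∀ x ∈ S, ∀ y ∈ S, ∀ x' ∈ S, ∀ y' ∈ S,
    x ≠ y → x' ≠ y' → delta x y % 2 = delta x' y' % 2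

/-- The lexicographic strict order on `2^ω`. -/
noncomputable def lexLt (x y : ℕ → Bool) : Prop :=
  x ≠ y ∧ x (delta x y) < y (delta x y)

/-- The map flipping the bits at even coordinates. -/
def s₂ (x : ℕ → Bool) : ℕ → Bool :=
  fun n => if n % 2 = 0 then !x n else x n

lemma delta_mem {x y : ℕ → Bool} (h : x ≠ y) : x (delta x y) ≠ y (delta x y) :=
  Nat.sInf_mem (Function.ne_iff.mp h)

lemma delta_comm (x y : ℕ → Bool) : delta x y = delta y x := by
  unfold delta; congr 1; ext n; exact ne_comm

lemma s₂_ne {x y : ℕ → Bool} (h : x ≠ y) : s₂ x ≠ s₂ y := by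
  obtain ⟨n, hn⟩ := Function.ne_iff.mp h
  refine Function.ne_iff.mpr ⟨n, ?_⟩
  unfold s₂
  split <;> simpa using hn

lemma delta_s₂ (x y : ℕ → Bool) : delta (s₂ x) (s₂ y) = delta x y := by
  unfold delta; congr 1; ext n
  simp only [Set.mem_setOf_eq, s₂]
  by_cases hn : n % 2 = 0 <;> simp [hn]

lemma lexLt_trichotomy {x y : ℕ → Bool} (h : x ≠ y) : lexLt x y ∨ lexLt y x := by
  have hm := delta_mem h
  have hc := delta_comm x y
  rcases hm.lt_or_gt with hlt | hlt
  · exact Or.inl ⟨h, hlt⟩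
  · exact Or.inr ⟨h.symm, by rw [← hc]; exact hlt⟩

lemma lexLt_asymm {x y : ℕ → Bool} (h : lexLt x y) : ¬ lexLt y x := by
  intro h'
  obtain ⟨_, h2⟩ := h'
  rw [delta_comm y x] at h2
  exact lt_asymm h.2 h2

lemma lexLt_s₂_even {x y : ℕ → Bool} (h : lexLt x y) (he : delta x y % 2 = 0) :
    lexLt (s₂ y) (s₂ x) := by
  obtain ⟨hne, hlt⟩ := h
  have hd : delta (s₂ y) (s₂ x) = delta x y := by
    rw [delta_comm, delta_s₂]
  refine ⟨(s₂_ne hne.symm), ?_⟩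
  rw [hd]
  obtain ⟨hx, hy⟩ := Bool.lt_iff.mp hlt
  simp [s₂, he, hx, hy]

lemma lexLt_s₂_odd {x y : ℕ → Bool} (h : lexLt x y) (he : delta x y % 2 ≠ 0) :
    lexLt (s₂ x) (s₂ y) := by
  obtain ⟨hne, hlt⟩ := h
  have hd : delta (s₂ x) (s₂ y) = delta x y := delta_s₂ x y
  refine ⟨s₂_ne hne, ?_⟩
  rw [hd]
  obtain ⟨hx, hy⟩ := Bool.lt_iff.mp hlt
  simp [s₂, he, hx, hy]

/-- `A ⊆ 2^ω` is monochromatic iff `s₂` restricted to `A` is monotone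
(order-preserving or order-reversing) for the lexicographic order. -/
theorem monochromatic_iff_s₂_monotone (A : Set (ℕ → Bool)) :
    Monochromatic A ↔
      ((∀ a ∈ A, ∀ b ∈ A, lexLt a b → lexLt (s₂ a) (s₂ b)) ∨
       (∀ a ∈ A, ∀ b ∈ A, lexLt a b → lexLt (s₂ b) (s₂ a))) := by
  constructor
  · intro hmono
    by_cases h : ∃ a ∈ A, ∃ b ∈ A, a ≠ b ∧ delta a b % 2 = 0
    · obtain ⟨a, ha, b, hb, hab, hev⟩ := h
      right
      intro x hx y hy hxy
      have : delta x y % 2 = delta a b % 2 := hmono x hx y hy a ha b hb hxy.1 hab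
      exact lexLt_s₂_even hxy (this.trans hev)
    · left
      intro x hx y hy hxy
      apply lexLt_s₂_odd hxy
      intro hev
      exact h ⟨x, hx, y, hy, hxy.1, hev⟩
  · intro H
    rcases H with H | H
    · -- all deltas are odd
      have key : ∀ x ∈ A, ∀ y ∈ A, x ≠ y → delta x y % 2 = 1 := by
        intro x hx y hy hxy
        rcases lexLt_trichotomy hxy with h | h
        · by_contra hne
          have hne' : delta x y % 2 = 0 := by omega
          exact lexLt_asymm (H x hx y hy h) (lexLt_s₂_even h hne')
        · by_contra hne
          have hne' : delta y x % 2 = 0 := by rw [delta_comm]; omega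
          exact lexLt_asymm (H y hy x hx h) (lexLt_s₂_even h hne')
      intro x hx y hy x' hx' y' hy' h1 h2
      rw [key x hx y hy h1, key x' hx' y' hy' h2]
    · -- all deltas are even
      have key : ∀ x ∈ A, ∀ y ∈ A, x ≠ y → delta x y % 2 = 0 := by
        intro x hx y hy hxy
        rcases lexLt_trichotomy hxy with h | h
        · by_contra hne
          exact lexLt_asymm (H x hx y hy h) (lexLt_s₂_odd h hne)
        · by_contra hne
          rw [delta_comm] at hne
          exact lexLt_asymm (H y hy x hx h) (lexLt_s₂_odd h hne)
      intro x hx y hy x' hx' y' hy' h1 h2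
      rw [key x hx y hy h1, key x' hx' y' hy' h2]
end

section
/- Let L be an uncountable linear order and T a tree ordering ⊴ on L. Define the lexicographic-like linear order ⪯ derived from ⊴ together with indices as in a Suslin-line-from-tree construction (x ⪯ y iff x ⊴ y, or x and y are ⊴-incomparable and n(min{z ⊴ x : z ⋬ y}) > n(min{z ⊴ y : z ⋬ x})). If every countable subset D ⊆ L is contained in some initial segment α × ω of the tree and the tree has the property that every node has infinitely many immediate successors and every node extends to every higher level, then (L, ⪯) is non-separable. -/
/-!
Fix a level `α` above every node of the countable set `D` and a chain `a ◁ c ◁ b` starting on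
level `α`. The cone `{d | a ⊴ d}` is convex for `⪯`: two nodes of the cone split off from a node
outside it at the same pair of points, so that node cannot lie between them. Hence every node
strictly between `a` and `b` lies above `a` and is not in `D`, while `c` is such a node.
-/

open Cardinal

/-- Countable ordinals: indices of levels. -/
abbrev Idx := {o : Ordinal // o < (Cardinal.aleph 1).ord}

/-- Nodes of the tree: `(α, k) ∈ ω₁ × ω`, with height `α` and index `k`. -/
abbrev Node := Idx × ℕ

/-- `tle` is a tree ordering on `ω₁ × ω` whose `α`-th level is `{α} × ω`. -/
structure IsTreeOrder (tle : Node → Node → Prop) : Prop where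
  refl : ∀ x, tle x x
  antisymm : ∀ x y, tle x y → tle y x → x = y
  trans : ∀ x y z, tle x y → tle y z → tle x z
  ht_mono : ∀ x y, tle x y → x.1.1 ≤ y.1.1
  pred_exists : ∀ (y : Node) (α : Idx), α.1 ≤ y.1.1 → ∃ k : ℕ, tle (α, k) y
  pred_linear : ∀ x y z, tle x z → tle y z → (tle x y ∨ tle y x)

/-- The lexicographic-like linearization of a tree ordering: `x ⪯ y` iff
`x ⊴ y`, or `x ⊥ y` and the `⊴`-least predecessor `u` of `x` not below `y`
has larger `n`-index than the `⊴`-least predecessor `v` of `y` not below `x`. -/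
def LexLike (tle : Node → Node → Prop) (x y : Node) : Prop :=
  tle x y ∨ (¬tle x y ∧ ¬tle y x ∧ ∃ u v : Node,
    tle u x ∧ ¬tle u y ∧ (∀ w, tle w x → ¬tle w y → tle u w) ∧
    tle v y ∧ ¬tle v x ∧ (∀ w, tle w y → ¬tle w x → tle v w) ∧
    v.2 < u.2)

def LexLt (tle : Node → Node → Prop) (x y : Node) : Prop :=
  LexLike tle x y ∧ x ≠ y

namespace Idx

theorem isSuccLimit_ord : Order.IsSuccLimit (aleph 1).ord :=
  Cardinal.isSuccLimit_ord (Cardinal.aleph0_le_aleph 1)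

def succ (α : Idx) : Idx := ⟨Order.succ α.1, isSuccLimit_ord.succ_lt α.2⟩

theorem lt_succ (α : Idx) : α.1 < α.succ.1 := Order.lt_succ α.1

theorem exists_gt_of_countable {s : Set Idx} (hs : s.Countable) : ∃ α : Idx, ∀ β ∈ s, β < α := by
  have := hs.to_subtype
  have hsup : ⨆ β : s, Order.succ β.1.1 < (aleph 1).ord :=
    (Ordinal.iSup_lt_omega_one fun β => β.1.succ.2.trans_eq (ord_aleph 1)).trans_eq
      (ord_aleph 1).symm
  refine ⟨⟨_, hsup⟩, fun β hβ => ?_⟩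
  exact (Order.lt_succ β.1).trans_le (Ordinal.le_iSup (fun β : s => Order.succ β.1.1) ⟨β, hβ⟩)

end Idx

theorem lexLt_of_tle_of_height_lt {tle : Node → Node → Prop} {x y : Node} (h : tle x y)
    (hxy : x.1.1 < y.1.1) : LexLt tle x y :=
  ⟨Or.inl h, fun e => hxy.ne (congrArg (fun z : Node => z.1.1) e)⟩

structure IsLeastPredNotBelow (tle : Node → Node → Prop) (y z u : Node) : Prop where
  tle_left : tle u y
  not_tle_right : ¬tle u z
  least : ∀ w, tle w y → ¬tle w z → tle u w

namespace IsTreeOrder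

variable {tle : Node → Node → Prop} (htree : IsTreeOrder tle) {x a b d : Node}
include htree

theorem tle_of_tle_of_not_tle {w : Node} (hxa : tle x a) (hxb : tle x b) (hxd : ¬tle x d)
    (hwd : tle w d) (hwa : tle w a) : tle w b :=
  (htree.pred_linear w x a hwa hxa).elim (fun hwx => htree.trans _ _ _ hwx hxb)
    fun hxw => absurd (htree.trans _ _ _ hxw hwd) hxd

theorem isLeastPredNotBelow_left_unique {u v : Node} (hxa : tle x a) (hxb : tle x b)
    (hxd : ¬tle x d) (hu : IsLeastPredNotBelow tle a d u) (hv : IsLeastPredNotBelow tle b d v) :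
    u = v :=
  htree.antisymm _ _
    (hu.least v (htree.trans _ _ _ (hv.least x hxb hxd) hxa)
      hv.not_tle_right)
    (hv.least u (htree.trans _ _ _ (hu.least x hxa hxd) hxb)
      hu.not_tle_right)

theorem isLeastPredNotBelow_right_unique {u v : Node} (hxa : tle x a) (hxb : tle x b)
    (hxd : ¬tle x d) (hu : IsLeastPredNotBelow tle d a u) (hv : IsLeastPredNotBelow tle d b v) :
    u = v :=
  htree.antisymm _ _
    (hu.least v hv.tle_left fun hva =>
      hv.not_tle_right (htree.tle_of_tle_of_not_tle hxa hxb hxd hv.tle_left hva))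
    (hv.least u hu.tle_left fun hub =>
      hu.not_tle_right (htree.tle_of_tle_of_not_tle hxb hxa hxd hu.tle_left hub))

theorem tle_of_lexLike_of_lexLike (hxa : tle x a) (hxb : tle x b) (had : LexLike tle a d)
    (hdb : LexLike tle d b) : tle x d := by
  by_contra hxd
  rcases had with had | ⟨-, hda, u, v, hua, hud, hu, hvd, hva, hv, hvu⟩
  · exact hxd (htree.trans _ _ _ hxa had)
  rcases hdb with hdb | ⟨-, -, u', v', hu'd, hu'b, hu', hv'b, hv'd, hv', hv'u'⟩
  · rcases htree.pred_linear d x b hdb hxb with hdx | hxd'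
    · exact hda (htree.trans _ _ _ hdx hxa)
    · exact hxd hxd'
  have hvu' : v = u' := htree.isLeastPredNotBelow_right_unique hxa hxb hxd
    ⟨hvd, hva, hv⟩ ⟨hu'd, hu'b, hu'⟩
  have huv' : u = v' := htree.isLeastPredNotBelow_left_unique hxa hxb hxd
    ⟨hua, hud, hu⟩ ⟨hv'b, hv'd, hv'⟩
  subst hvu' huv'
  exact lt_asymm hvu hv'u'

end IsTreeOrder

theorem lexLike_nonseparable_general (tle : Node → Node → Prop) (htree : IsTreeOrder tle)
    (hext : ∀ (x : Node) (β : Idx), x.1.1 ≤ β.1 → ∃ m : ℕ, tle x (β, m)) :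
    ∀ D : Set Node, D.Countable →
      ∃ a b : Node, (∃ c : Node, LexLt tle a c ∧ LexLt tle c b) ∧
        ∀ d ∈ D, ¬(LexLt tle a d ∧ LexLt tle d b) := by
  intro D hD
  obtain ⟨α, hα⟩ := Idx.exists_gt_of_countable (hD.image fun x => x.1)
  obtain ⟨m, hac⟩ := hext (α, 0) α.succ α.lt_succ.le
  obtain ⟨n, hcb⟩ := hext (α.succ, m) α.succ.succ (α.succ.lt_succ.le)
  refine ⟨(α, 0), (α.succ.succ, n), ⟨(α.succ, m), lexLt_of_tle_of_height_lt hac α.lt_succ,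
    lexLt_of_tle_of_height_lt hcb α.succ.lt_succ⟩, fun d hd ⟨had, hdb⟩ => ?_⟩
  have hab : tle (α, 0) (α.succ.succ, n) := htree.trans _ _ _ hac hcb
  have had' : tle (α, 0) d := htree.tle_of_lexLike_of_lexLike (htree.refl _) hab had.1 hdb.1
  exact (hα d.1 ⟨d, hd, rfl⟩).not_ge (htree.ht_mono _ _ had')

/-- If every node has infinitely many immediate successors, every node extends to
every higher level, and every countable set of nodes lies in an initial segment
`α × ω`, then the lexicographic-like linearization is non-separable: every
countable `D` misses some nonempty open interval. -/
theorem lexLike_nonseparable (tle : Node → Node → Prop) (htree : IsTreeOrder tle)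
    (hsucc : ∀ (x : Node) (β : Idx), β.1 = Order.succ x.1.1 →
      {m : ℕ | tle x (β, m)}.Infinite)
    (hext : ∀ (x : Node) (β : Idx), x.1.1 ≤ β.1 → ∃ m : ℕ, tle x (β, m))
    (hbound : ∀ D : Set Node, D.Countable → ∃ α : Idx, ∀ x ∈ D, x.1.1 < α.1) :
    ∀ D : Set Node, D.Countable →
      ∃ a b : Node, (∃ c : Node, LexLt tle a c ∧ LexLt tle c b) ∧
        ∀ d ∈ D, ¬(LexLt tle a d ∧ LexLt tle d b) :=
  lexLike_nonseparable_general tle htree hext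
end
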